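/- arXiv:2407.19267 — 4 statements merged into one kernel-verified Lean document; each statement's English description precedes it below -/
import Mathlib

section
/- Let (A,B1,B2,a,b) be a triangle of dimension (v1,v2), i.e. A : C^{v1} → C^{v2}, B1 ∈ End(C^{v1}), B2 ∈ End(C^{v2}), b : C^{v1} → C, a : C → C^{v2} satisfying B2∘A − A∘B1 + a∘b = 0, such that there is no nonzero B1-invariant subspace S ⊆ C^{v1} with A(S) = 0 and b(S) = 0, and no proper B2-invariant subspace T ⊊ C^{v2} containing Im A + Im a. Then A has full rank, i.e. rank A = min(v1, v2). -/
/-!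
If `b` vanishes on `ker A`, the triangle equation `A B1 = B2 A + a b` makes `ker A` a
`B1`-invariant subspace of `ker A ∩ ker b`, so `A` is injective by (S1). Otherwise some
`y ∈ ker A` has `b y ≠ 0`, and `A (B1 y) = b y • a 1` puts `Im a` inside `Im A`; then `Im A`
is `B2`-invariant, so `A` is surjective by (S2). Either way `A` has full rank.
-/

open Module

theorem LinearMap.finrank_range_eq_min_of_ker_eq_bot_or_range_eq_top {K V W : Type*}
    [Field K] [AddCommGroup V] [Module K V] [FiniteDimensional K V]
    [AddCommGroup W] [Module K W] [FiniteDimensional K W] {f : V →ₗ[K] W}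
    (hf : LinearMap.ker f = ⊥ ∨ LinearMap.range f = ⊤) :
    finrank K (LinearMap.range f) = min (finrank K V) (finrank K W) := by
  rcases hf with hker | hrange
  · rw [LinearMap.finrank_range_of_inj (LinearMap.ker_eq_bot.mp hker)]
    exact (min_eq_left (LinearMap.finrank_le_finrank_of_injective
      (LinearMap.ker_eq_bot.mp hker))).symm
  · have hle := LinearMap.finrank_range_le f
    rw [hrange, finrank_top] at hle ⊢
    exact (min_eq_right hle).symm

namespace Triangle

variable {K V₁ V₂ : Type*} [Field K] [AddCommGroup V₁] [Module K V₁]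
  [AddCommGroup V₂] [Module K V₂]
  {A : V₁ →ₗ[K] V₂} {B₁ : Module.End K V₁} {B₂ : Module.End K V₂}
  {b : V₁ →ₗ[K] K} {a : K →ₗ[K] V₂}

theorem apply_comp_eq (htri : B₂ ∘ₗ A - A ∘ₗ B₁ + a ∘ₗ b = 0) (y : V₁) :
    A (B₁ y) = B₂ (A y) + b y • a 1 := by
  have h := LinearMap.congr_fun htri y
  rw [LinearMap.add_apply, LinearMap.sub_apply, LinearMap.zero_apply, sub_add_eq_add_sub,
    sub_eq_zero] at h
  rw [← map_smul, smul_eq_mul, mul_one]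
  exact h.symm

theorem map_ker_le_ker (htri : B₂ ∘ₗ A - A ∘ₗ B₁ + a ∘ₗ b = 0)
    (hb : LinearMap.ker A ≤ LinearMap.ker b) :
    (LinearMap.ker A).map B₁ ≤ LinearMap.ker A := by
  rintro _ ⟨y, hy, rfl⟩
  rw [SetLike.mem_coe, LinearMap.mem_ker] at hy
  rw [LinearMap.mem_ker, apply_comp_eq htri, hy, LinearMap.mem_ker.mp (hb hy)]
  simp

theorem range_le_range_of_not_ker_le (htri : B₂ ∘ₗ A - A ∘ₗ B₁ + a ∘ₗ b = 0)
    (hb : ¬ LinearMap.ker A ≤ LinearMap.ker b) :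
    LinearMap.range a ≤ LinearMap.range A := by
  obtain ⟨y, hy, hby⟩ := SetLike.not_le_iff_exists.mp hb
  rw [LinearMap.mem_ker] at hy hby
  have ha : a 1 ∈ LinearMap.range A := by
    refine ⟨(b y)⁻¹ • B₁ y, ?_⟩
    rw [map_smul, apply_comp_eq htri, hy, map_zero, zero_add, smul_smul,
      inv_mul_cancel₀ hby, one_smul]
  rintro _ ⟨c, rfl⟩
  rw [← mul_one c, ← smul_eq_mul, map_smul]
  exact Submodule.smul_mem _ c ha

theorem map_range_le_range (htri : B₂ ∘ₗ A - A ∘ₗ B₁ + a ∘ₗ b = 0)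
    (ha : LinearMap.range a ≤ LinearMap.range A) :
    (LinearMap.range A).map B₂ ≤ LinearMap.range A := by
  rintro _ ⟨_, ⟨y, rfl⟩, rfl⟩
  have h : B₂ (A y) = A (B₁ y) - b y • a 1 := by rw [apply_comp_eq htri]; abel
  rw [h]
  exact Submodule.sub_mem _ (LinearMap.mem_range_self A _)
    (Submodule.smul_mem _ _ (ha (LinearMap.mem_range_self a 1)))

theorem ker_eq_bot_or_range_eq_top (htri : B₂ ∘ₗ A - A ∘ₗ B₁ + a ∘ₗ b = 0)
    (hS1 : ∀ S : Submodule K V₁, S.map B₁ ≤ S → S.map A = ⊥ → S.map b = ⊥ → S = ⊥)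
    (hS2 : ∀ T : Submodule K V₂, T.map B₂ ≤ T →
      LinearMap.range A ⊔ LinearMap.range a ≤ T → T = ⊤) :
    LinearMap.ker A = ⊥ ∨ LinearMap.range A = ⊤ := by
  by_cases hb : LinearMap.ker A ≤ LinearMap.ker b
  · exact .inl (hS1 _ (map_ker_le_ker htri hb) (LinearMap.le_ker_iff_map.mp le_rfl)
      (LinearMap.le_ker_iff_map.mp hb))
  · have ha := range_le_range_of_not_ker_le htri hb
    exact .inr (hS2 _ (map_range_le_range htri ha) (sup_le le_rfl ha))

end Triangle

/-- A triangle `(A, B1, B2, a, b)` of dimension `(v1, v2)` satisfying the triangle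
equation and the stability conditions (S1), (S2) has full rank `A`. -/
theorem stmt0 (v1 v2 : ℕ)
    (A : (Fin v1 → ℂ) →ₗ[ℂ] (Fin v2 → ℂ))
    (B1 : Module.End ℂ (Fin v1 → ℂ)) (B2 : Module.End ℂ (Fin v2 → ℂ))
    (b : (Fin v1 → ℂ) →ₗ[ℂ] ℂ) (a : ℂ →ₗ[ℂ] (Fin v2 → ℂ))
    (htri : B2 ∘ₗ A - A ∘ₗ B1 + a ∘ₗ b = 0)
    (hS1 : ∀ S : Submodule ℂ (Fin v1 → ℂ), S.map B1 ≤ S →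
      S.map A = ⊥ → S.map b = ⊥ → S = ⊥)
    (hS2 : ∀ T : Submodule ℂ (Fin v2 → ℂ), T.map B2 ≤ T →
      LinearMap.range A ⊔ LinearMap.range a ≤ T → T = ⊤) :
    Module.finrank ℂ (LinearMap.range A) = min v1 v2 := by
  have h := LinearMap.finrank_range_eq_min_of_ker_eq_bot_or_range_eq_top
    (Triangle.ker_eq_bot_or_range_eq_top htri hS1 hS2)
  rwa [finrank_fin_fun, finrank_fin_fun] at h
end

section
/- There do not exist matrices B^- ∈ End(C^5), C : C^2 → C^5, D : C^5 → C^2, A : C^5 → C^2, b : (C^5)* (i.e. b : C^5 → C), a ∈ C^2 and B^+ ∈ End(C^2) satisfying all of: (a) B^+ A − A B^- + a b = 0; (S1) every B^- -invariant subspace contained in Ker A ∩ Ker b is zero; (S2) A is surjective; (I) C D + B^- = 0; (II) D C = 0; (III) B^+ = 0. -/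
/-!
From (I) and (II), `B⁻ = -CD` squares to zero, and with `B⁺ = 0` the moment map (a) reads
`A B⁻ = a b`. So `B⁻` sends `K := Ker A ∩ Ker b` into `Ker A ∩ Ker B⁻`, and (S1), applied to the
invariant subspace `Ker B⁻ ∩ K`, makes it injective on `K` with `B⁻ K ∩ K = 0`. Hence
`2 dim K ≤ dim Ker A ≤ dim K + 1`, i.e. `dim Ker A ≤ 2`, while (S2) forces `dim Ker A = 5 - 2 = 3`.
-/

open Module LinearMap

section

variable {K V W : Type*} [Field K] [AddCommGroup V] [Module K V] [AddCommGroup W] [Module K W]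

theorem Submodule.finrank_map_eq_of_disjoint_ker (f : V →ₗ[K] W) {S : Submodule K V}
    (h : Disjoint (ker f) S) : finrank K (S.map f) = finrank K S := by
  have hinj : Function.Injective (f ∘ₗ S.subtype) := by
    rw [← ker_eq_bot, ker_comp, ← Submodule.disjoint_iff_comap_eq_bot]
    simpa [disjoint_comm] using h
  rw [← finrank_range_of_inj hinj, range_comp, Submodule.range_subtype]

variable [FiniteDimensional K V]

theorem finrank_ker_le_finrank_ker_inf_ker_add_one (A : V →ₗ[K] W) (b : V →ₗ[K] K) :
    finrank K (ker A) ≤ finrank K ↥(ker A ⊓ ker b) + 1 := by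
  have hsup := Submodule.finrank_sup_add_finrank_inf_eq (ker A) (ker b)
  have hsup_le := Submodule.finrank_le (ker A ⊔ ker b)
  have hb := finrank_range_add_finrank_ker b
  have hrange : finrank K (range b) ≤ 1 := (Submodule.finrank_le _).trans_eq (finrank_self K)
  omega

theorem finrank_ker_le_two_of_sq_eq_zero {B : Module.End K V} (hB : B ∘ₗ B = 0)
    {A : V →ₗ[K] W} {b : V →ₗ[K] K} {a : K →ₗ[K] W} (hAB : A ∘ₗ B = a ∘ₗ b)
    (hdisj : Disjoint (ker B) (ker A ⊓ ker b)) : finrank K (ker A) ≤ 2 := by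
  set S := ker A ⊓ ker b
  have himage_le_ker : S.map B ≤ ker B := by
    rintro _ ⟨x, -, rfl⟩
    simpa using congr($hB x)
  have himage_le : S.map B ≤ ker A := by
    rintro _ ⟨x, ⟨-, hx⟩, rfl⟩
    rw [mem_ker, ← comp_apply, hAB, comp_apply, mem_ker.mp hx, map_zero]
  have himage_disj : Disjoint (S.map B) S := hdisj.mono_left himage_le_ker
  have hsum := Submodule.finrank_sup_add_finrank_inf_eq (S.map B) S
  rw [himage_disj.eq_bot, finrank_bot, Submodule.finrank_map_eq_of_disjoint_ker B hdisj] at hsum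
  have hsup_le : finrank K ↥(S.map B ⊔ S) ≤ finrank K (ker A) :=
    Submodule.finrank_mono (sup_le himage_le inf_le_left)
  have hcodim : finrank K (ker A) ≤ finrank K S + 1 :=
    finrank_ker_le_finrank_ker_inf_ker_add_one A b
  omega

end

/-- The bow variety of Example 5.7 is empty: no data with the given
moment-map and stability conditions exists. -/
theorem stmt5 :
    ¬ ∃ (Bm : Module.End ℂ (Fin 5 → ℂ))
        (C : (Fin 2 → ℂ) →ₗ[ℂ] (Fin 5 → ℂ))
        (D : (Fin 5 → ℂ) →ₗ[ℂ] (Fin 2 → ℂ))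
        (A : (Fin 5 → ℂ) →ₗ[ℂ] (Fin 2 → ℂ))
        (b : (Fin 5 → ℂ) →ₗ[ℂ] ℂ)
        (a : ℂ →ₗ[ℂ] (Fin 2 → ℂ))
        (Bp : Module.End ℂ (Fin 2 → ℂ)),
      (Bp ∘ₗ A - A ∘ₗ Bm + a ∘ₗ b = 0) ∧
      (∀ S : Submodule ℂ (Fin 5 → ℂ), S.map Bm ≤ S →
        S.map A = ⊥ → S.map b = ⊥ → S = ⊥) ∧
      Function.Surjective A ∧
      (C ∘ₗ D + Bm = 0) ∧
      (D ∘ₗ C = 0) ∧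
      (Bp = 0) := by
  rintro ⟨Bm, C, D, A, b, a, Bp, ha, hS1, hsurj, hI, hII, rfl⟩
  have hBm : Bm = -(C ∘ₗ D) := eq_neg_of_add_eq_zero_right hI
  have hsq : Bm ∘ₗ Bm = 0 := by
    rw [hBm, neg_comp, comp_neg, neg_neg, comp_assoc, ← comp_assoc D, hII, zero_comp, comp_zero]
  have hAB : A ∘ₗ Bm = a ∘ₗ b := by
    rw [zero_comp, zero_sub] at ha
    exact neg_add_eq_zero.mp ha
  have hdisj : Disjoint (ker Bm) (ker A ⊓ ker b) := by
    rw [disjoint_iff]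
    refine hS1 _ ?_ ?_ ?_
    · rintro _ ⟨x, ⟨hx, -⟩, rfl⟩
      simp [mem_ker.mp hx]
    · exact le_ker_iff_map.mp <| inf_le_right.trans inf_le_left
    · exact le_ker_iff_map.mp <| inf_le_right.trans inf_le_right
  have hkerA : finrank ℂ (ker A) = 3 := by
    have := finrank_range_add_finrank_ker A
    rw [range_eq_top.mpr hsurj, finrank_top, finrank_fin_fun, finrank_fin_fun] at this
    omega
  have hkerA_le := finrank_ker_le_two_of_sq_eq_zero hsq hAB hdisj
  omega
end

section
/- Let V be a 1-dimensional complex vector space and W a 2-dimensional complex vector space, and consider pairs (I, J) with I : W → V, J : V → W satisfying I∘J = 0 and J injective. The map sending (I,J) to (Im J, J∘I) induces a bijection between the set of GL(V)-orbits of such pairs (where g·(I,J) = (I g^{-1}, g J)) and the set of pairs (L, A) where L ⊆ W is a 1-dimensional subspace and A ∈ End(W) satisfies A(L) = 0 and Im A ⊆ L. -/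
/-! Since `J : V → W` is injective and `V` is a line, `J` identifies `V` with `L = Im J`, so
`J ∘ I` is just `I` with its target `V` relabelled as `L`; conversely `A` with `Im A ⊆ L ⊆ ker A`
factors through `L ≅ V` as `J ∘ I` with `I ∘ J = 0`. Two injections `V → W` with the same image
differ by an automorphism of the line `V`, i.e. a scalar `g`, and injectivity of `J` then forces
`I' = g⁻¹ I`. -/

namespace LinearMap

section Ring

variable {R V W : Type*} [Ring R] [AddCommGroup V] [Module R V] [AddCommGroup W] [Module R W]

theorem range_le_ker_comp_of_comp_eq_zero {I : W →ₗ[R] V} {J : V →ₗ[R] W} (h : I ∘ₗ J = 0) :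
    range J ≤ ker (J ∘ₗ I) := by
  rw [range_le_ker_iff, comp_assoc, h, comp_zero]

theorem exists_comp_eq_of_range_le_of_le_ker {L : Submodule R W} (e : V ≃ₗ[R] L)
    {A : Module.End R W} (hker : L ≤ ker A) (hrange : range A ≤ L) :
    ∃ (I : W →ₗ[R] V) (J : V →ₗ[R] W),
      I ∘ₗ J = 0 ∧ Function.Injective J ∧ range J = L ∧ J ∘ₗ I = A := by
  have hA : ∀ x, A x ∈ L := fun x => hrange (mem_range_self A x)
  refine ⟨e.symm ∘ₗ A.codRestrict L hA, L.subtype ∘ₗ e, ?_, ?_, ?_, ?_⟩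
  · ext v
    simpa [Subtype.ext_iff] using hker (e v).2
  · exact L.injective_subtype.comp e.injective
  · rw [range_comp_of_range_eq_top _ e.range, Submodule.range_subtype]
  · ext x
    simp

end Ring

section Field

variable {K W : Type*} [Field K] [AddCommGroup W] [Module K W]

theorem exists_unit_smul_eq_of_range_le {J J' : K →ₗ[K] W} (hJ' : Function.Injective J')
    (hle : range J' ≤ range J) : ∃ g : Kˣ, J' = (g : K) • J := by
  obtain ⟨c, hc⟩ := hle (mem_range_self J' 1)
  have hc0 : c ≠ 0 := by
    rintro rfl
    exact one_ne_zero (hJ' (by rw [← hc, map_zero, map_zero]))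
  refine ⟨Units.mk0 c hc0, ext_ring ?_⟩
  rw [← hc, smul_apply, Units.val_mk0, ← map_smul, smul_eq_mul, mul_one]

theorem range_eq_and_comp_eq_iff {I I' : W →ₗ[K] K} {J J' : K →ₗ[K] W}
    (hJ : Function.Injective J) (hJ' : Function.Injective J') :
    (range J = range J' ∧ J ∘ₗ I = J' ∘ₗ I') ↔
      ∃ g : Kˣ, I' = (g : K)⁻¹ • I ∧ J' = (g : K) • J := by
  constructor
  · rintro ⟨hr, hc⟩
    obtain ⟨g, rfl⟩ := exists_unit_smul_eq_of_range_le hJ' hr.ge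
    refine ⟨g, ?_, rfl⟩
    have hI : I = (g : K) • I' := by
      ext x
      apply hJ
      rw [smul_apply, map_smul]
      simpa using congr($hc x)
    rw [hI, smul_smul, inv_mul_cancel₀ g.ne_zero, one_smul]
  · rintro ⟨g, rfl, rfl⟩
    refine ⟨(range_smul J _ g.ne_zero).symm, ?_⟩
    rw [smul_comp, comp_smul, smul_smul, mul_inv_cancel₀ g.ne_zero, one_smul]

end Field

end LinearMap

/-- The map `(I,J) ↦ (Im J, J∘I)` induces a bijection between `GL(V)`-orbits of
pairs `(I,J)` with `I∘J = 0`, `J` injective (for `V = ℂ`, `W = ℂ²`) and pairs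
`(L, A)` with `L ⊆ W` a line, `A(L) = 0`, `Im A ⊆ L`. -/
theorem stmt7 :
    -- well-definedness: the image lands in the target set
    (∀ (I : (Fin 2 → ℂ) →ₗ[ℂ] ℂ) (J : ℂ →ₗ[ℂ] (Fin 2 → ℂ)),
      I ∘ₗ J = 0 → Function.Injective J →
      Module.finrank ℂ (LinearMap.range J) = 1 ∧
      LinearMap.range J ≤ LinearMap.ker (J ∘ₗ I) ∧
      LinearMap.range (J ∘ₗ I) ≤ LinearMap.range J) ∧
    -- surjectivity onto pairs (L, A)
    (∀ (L : Submodule ℂ (Fin 2 → ℂ)) (A : Module.End ℂ (Fin 2 → ℂ)),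
      Module.finrank ℂ L = 1 → L ≤ LinearMap.ker A → LinearMap.range A ≤ L →
      ∃ (I : (Fin 2 → ℂ) →ₗ[ℂ] ℂ) (J : ℂ →ₗ[ℂ] (Fin 2 → ℂ)),
        I ∘ₗ J = 0 ∧ Function.Injective J ∧
        LinearMap.range J = L ∧ J ∘ₗ I = A) ∧
    -- two pairs have the same image iff they are in the same GL(V)-orbit
    (∀ (I I' : (Fin 2 → ℂ) →ₗ[ℂ] ℂ) (J J' : ℂ →ₗ[ℂ] (Fin 2 → ℂ)),
      I ∘ₗ J = 0 → Function.Injective J →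
      I' ∘ₗ J' = 0 → Function.Injective J' →
      ((LinearMap.range J = LinearMap.range J' ∧ J ∘ₗ I = J' ∘ₗ I') ↔
        ∃ g : ℂˣ, I' = (g : ℂ)⁻¹ • I ∧ J' = (g : ℂ) • J)) := by
  refine ⟨fun I J hIJ hJ => ⟨?_, LinearMap.range_le_ker_comp_of_comp_eq_zero hIJ,
      LinearMap.range_comp_le_range I J⟩,
    fun L A hL hker hrange => ?_,
    fun I I' J J' _ hJ _ hJ' => LinearMap.range_eq_and_comp_eq_iff hJ hJ'⟩
  · rw [LinearMap.finrank_range_of_inj hJ, Module.finrank_self]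
  · have : Module.Finite ℂ L := Module.finite_of_finrank_eq_succ hL
    exact LinearMap.exists_comp_eq_of_range_le_of_le_ker
      (LinearEquiv.ofFinrankEq ℂ L (by rw [Module.finrank_self, hL])) hker hrange
end

section
/- (Cobalanced A1 bow example, structure of the residual quotient.) Consider tuples (A_0, B_0^-, B_0^+, b_0, a_0, A_1, B_1^-, B_1^+, b_1, a_1) of complex numbers (all vector spaces are C) with A_0, A_1 ≠ 0, satisfying B_i^+ A_i − A_i B_i^- + a_i b_i = 0 for i = 0,1, together with the moment-map conditions B_1^+ = 0 and B_0^+ = B_1^-, under the free action of H = C^× × C^× given by (k_1,k_2)·(A_0,…) = (k_1 A_0, B_0^-, B_0^+, b_0, k_1 a_0, k_2 A_1 k_1^{-1}, B_1^-, B_1^+, b_1 k_1^{-1}, k_2 a_1). Then each H-orbit contains exactly one representative with A_0 = A_1 = 1, and for that representative the assignment (I,J) = ((a_0, a_1), (b_0, b_1)^T) is a bijection from the set of H-orbits onto {(I,J) : I : C^2 → C, J : C → C^2}, under which the induced value B_0^- corresponds to I J = a_0 b_0 + a_1 b_1. -/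
/-- Data of the cobalanced A₁ bow example (two x-points, dimension vector (1,1,1));
all vector spaces are `ℂ`, so all maps are complex numbers. -/
structure A1Data where
  A0 : ℂ
  B0m : ℂ
  B0p : ℂ
  b0 : ℂ
  a0 : ℂ
  A1 : ℂ
  B1m : ℂ
  B1p : ℂ
  b1 : ℂ
  a1 : ℂ

/-- The conditions cutting out the zero level set of the `H`-moment map:
`A₀, A₁ ≠ 0`, the two triangle equations, `B₁⁺ = 0` and `B₀⁺ = B₁⁻`. -/
def A1Data.valid (t : A1Data) : Prop :=
  t.A0 ≠ 0 ∧ t.A1 ≠ 0 ∧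
  t.B0p * t.A0 - t.A0 * t.B0m + t.a0 * t.b0 = 0 ∧
  t.B1p * t.A1 - t.A1 * t.B1m + t.a1 * t.b1 = 0 ∧
  t.B1p = 0 ∧ t.B0p = t.B1m

/-- The action of `H = ℂˣ × ℂˣ` by base-change on the non-first segments. -/
noncomputable def A1Data.act (k : ℂˣ × ℂˣ) (t : A1Data) : A1Data where
  A0 := (k.1 : ℂ) * t.A0
  B0m := t.B0m
  B0p := t.B0p
  b0 := t.b0
  a0 := (k.1 : ℂ) * t.a0
  A1 := (k.2 : ℂ) * t.A1 * (k.1 : ℂ)⁻¹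
  B1m := t.B1m
  B1p := t.B1p
  b1 := t.b1 * (k.1 : ℂ)⁻¹
  a1 := (k.2 : ℂ) * t.a1

lemma b0m_eq (t : A1Data) (hv : t.valid) (h0 : t.A0 = 1) (h1 : t.A1 = 1) :
    t.B0m = t.a0 * t.b0 + t.a1 * t.b1 := by
  obtain ⟨_, _, e0, e1, hp, he⟩ := hv
  rw [h0] at e0; rw [h1, hp] at e1
  have hB1m : t.B1m = t.a1 * t.b1 := by linear_combination -e1
  linear_combination -e0 + he + hB1m

/-- Every `H`-orbit of valid data contains exactly one representative with
`A₀ = A₁ = 1`; on this slice the assignment `t ↦ (I, J) = ((a₀, a₁), (b₀, b₁))`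
is a bijection onto all pairs `(I, J)`, and the representative satisfies
`B₀⁻ = a₀b₀ + a₁b₁ = IJ`. -/
theorem stmt11 :
    (∀ t : A1Data, t.valid →
      ∃! k : ℂˣ × ℂˣ, (A1Data.act k t).A0 = 1 ∧ (A1Data.act k t).A1 = 1) ∧
    Function.Bijective
      (fun t : {t : A1Data // t.valid ∧ t.A0 = 1 ∧ t.A1 = 1} =>
        ((t.val.a0, t.val.a1), (t.val.b0, t.val.b1)) : _ → (ℂ × ℂ) × (ℂ × ℂ)) ∧
    (∀ t : A1Data, t.valid → t.A0 = 1 → t.A1 = 1 →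
      t.B0m = t.a0 * t.b0 + t.a1 * t.b1) := by
  refine ⟨?_, ⟨?_, ?_⟩, fun t hv h0 h1 => b0m_eq t hv h0 h1⟩
  · rintro t ⟨h0, h1, -⟩
    refine ⟨((Units.mk0 t.A0 h0)⁻¹, (Units.mk0 (t.A0 * t.A1) (mul_ne_zero h0 h1))⁻¹), ?_, ?_⟩
    · constructor
      · simp [A1Data.act, inv_mul_cancel₀ h0]
      · simp only [A1Data.act, Units.val_inv_eq_inv_val, Units.val_mk0]
        field_simp
    · rintro ⟨k1, k2⟩ ⟨e1, e2⟩
      simp only [A1Data.act] at e1 e2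
      have hk1 : (k1 : ℂ) = t.A0⁻¹ := by
        field_simp at e1 ⊢; linear_combination e1
      have hk2 : (k2 : ℂ) = (t.A0 * t.A1)⁻¹ := by
        rw [hk1] at e2
        field_simp at e2 ⊢
        linear_combination e2
      ext <;> simp [hk1, hk2]
  · rintro ⟨t, hv, h0, h1⟩ ⟨s, hw, g0, g1⟩ h
    simp only [Prod.mk.injEq] at h
    obtain ⟨⟨ha0, ha1⟩, hb0, hb1⟩ := h
    have hB0m := b0m_eq t hv h0 h1
    have hB0m' := b0m_eq s hw g0 g1
    obtain ⟨-, -, -, e1, hp, he⟩ := hv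
    obtain ⟨-, -, -, e1', hp', he'⟩ := hw
    rw [h1, hp] at e1; rw [g1, hp'] at e1'
    have hB1m : t.B1m = t.a1 * t.b1 := by linear_combination -e1
    have hB1m' : s.B1m = s.a1 * s.b1 := by linear_combination -e1'
    have : t = s := by
      cases t; cases s
      simp_all
    exact Subtype.ext this
  · rintro ⟨⟨a0, a1⟩, b0, b1⟩
    refine ⟨⟨⟨1, a0 * b0 + a1 * b1, a1 * b1, b0, a0, 1, a1 * b1, 0, b1, a1⟩, ?_, rfl, rfl⟩, rfl⟩
    refine ⟨one_ne_zero, one_ne_zero, by ring, by ring, rfl, rfl⟩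
end
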